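/- For every real λ and every a ∈ ℝ, ∫_{-∞}^{a} 2·φ(u)·Φ(λu) du = Φ(a) − 2·T(a, λ), where T(h,k) = (1/(2π))·∫_0^k exp(−h²(1+t²)/2)/(1+t²) dt is Owen's T function. -/

import Mathlib

open Real MeasureTheory

/-- Standard normal pdf. -/
noncomputable def phi (x : ℝ) : ℝ := (Real.sqrt (2 * Real.pi))⁻¹ * Real.exp (-x ^ 2 / 2)

/-- Standard normal cdf. -/
noncomputable def Phi (x : ℝ) : ℝ := ∫ t in Set.Iic x, phi t

/-- Owen's T function. -/
noncomputable def owenT (h k : ℝ) : ℝ :=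
  (1 / (2 * Real.pi)) * ∫ t in (0:ℝ)..k, Real.exp (-h ^ 2 * (1 + t ^ 2) / 2) / (1 + t ^ 2)

open Set Filter Topology

/-!
Write `2 φ(u) Φ(λu) = φ(u) + 2 φ(u) (Φ(λu) - Φ(0))` and, substituting `t = s u`,
`Φ(λu) - Φ(0) = ∫₀^λ u φ(s u) ds`. After Fubini the inner integral is elementary, since
`u φ(u) φ(s u)` is a multiple of the derivative of `exp (-(1 + s²) u² / 2)`:
`∫_{-∞}^a u φ(u) φ(s u) du = -exp (-a² (1 + s²) / 2) / (2π (1 + s²))`,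
which is minus the integrand of `T(a, λ)`.
-/

lemma integral_Iic_mul_exp_neg_mul_sq {c : ℝ} (hc : 0 < c) (a : ℝ) :
    ∫ u in Iic a, u * exp (-c * u ^ 2) = -(exp (-c * a ^ 2) / (2 * c)) := by
  have hderiv (x : ℝ) : HasDerivAt (fun u => -(exp (-c * u ^ 2) / (2 * c)))
      (x * exp (-c * x ^ 2)) x := by
    refine ((((hasDerivAt_pow 2 x).const_mul (-c)).exp).div_const (2 * c)).neg.congr_deriv ?_
    field_simp
    ring
  have hlim : Tendsto (fun u => -(exp (-c * u ^ 2) / (2 * c))) atBot (𝓝 0) := by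
    have hsq : Tendsto (fun u : ℝ => u ^ 2) atBot atTop :=
      ((tendsto_pow_atTop two_ne_zero).comp tendsto_neg_atBot_atTop).congr fun u => neg_sq u
    simpa using ((tendsto_exp_atBot.comp ((tendsto_const_mul_atBot_of_neg
      (neg_neg_of_pos hc)).2 hsq)).div_const (2 * c)).neg
  simpa using integral_Iic_of_hasDerivAt_of_tendsto' (fun x _ => hderiv x)
    (integrable_mul_exp_neg_mul_sq hc).integrableOn hlim

lemma phi_eq_mul_exp_neg_mul_sq (x : ℝ) :
    phi x = (√(2 * π))⁻¹ * exp (-(1 / 2) * x ^ 2) := by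
  rw [phi]; ring_nf

lemma phi_nonneg (x : ℝ) : 0 ≤ phi x := by
  rw [phi]; positivity

lemma phi_le_inv_sqrt_two_pi (x : ℝ) : phi x ≤ (√(2 * π))⁻¹ := by
  rw [phi]
  exact mul_le_of_le_one_right (by positivity) (exp_le_one_iff.2 (by nlinarith [sq_nonneg x]))

lemma phi_neg (x : ℝ) : phi (-x) = phi x := by
  simp only [phi, neg_sq]

@[fun_prop]
lemma continuous_phi : Continuous phi := by
  unfold phi; fun_prop

lemma integrable_phi : Integrable phi := by
  simpa only [← phi_eq_mul_exp_neg_mul_sq] using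
    (integrable_exp_neg_mul_sq (by norm_num : (0:ℝ) < 1 / 2)).const_mul (√(2 * π))⁻¹

lemma integral_phi : ∫ x, phi x = 1 := by
  simp only [phi_eq_mul_exp_neg_mul_sq, integral_const_mul, integral_gaussian,
    show π / (1 / 2) = 2 * π by ring]
  exact inv_mul_cancel₀ (by positivity)

lemma integrable_mul_phi : Integrable fun u => u * phi u := by
  simpa only [phi_eq_mul_exp_neg_mul_sq, mul_left_comm] using
    (integrable_mul_exp_neg_mul_sq (by norm_num : (0:ℝ) < 1 / 2)).const_mul (√(2 * π))⁻¹

lemma phi_mul_phi_mul (s u : ℝ) :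
    phi u * phi (s * u) = (2 * π)⁻¹ * exp (-((1 + s ^ 2) / 2) * u ^ 2) := by
  rw [phi, phi, mul_mul_mul_comm, ← mul_inv, mul_self_sqrt (by positivity), ← exp_add]
  ring_nf

lemma Phi_nonneg (x : ℝ) : 0 ≤ Phi x :=
  setIntegral_nonneg measurableSet_Iic fun y _ => phi_nonneg y

lemma Phi_le_one (x : ℝ) : Phi x ≤ 1 :=
  integral_phi ▸ setIntegral_le_integral integrable_phi (.of_forall phi_nonneg)

lemma Phi_add_Phi_neg (x : ℝ) : Phi x + Phi (-x) = 1 := by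
  have h : Phi (-x) = ∫ t in Ioi x, phi t := by
    rw [Phi, ← integral_comp_neg_Ioi]
    simp only [phi_neg]
  rw [h, Phi, intervalIntegral.integral_Iic_add_Ioi integrable_phi.integrableOn
    integrable_phi.integrableOn, integral_phi]

lemma Phi_zero : Phi 0 = 1 / 2 := by
  linarith [neg_zero (G := ℝ) ▸ Phi_add_Phi_neg 0]

lemma Phi_sub_Phi (a b : ℝ) : Phi b - Phi a = ∫ t in a..b, phi t :=
  intervalIntegral.integral_Iic_sub_Iic integrable_phi.integrableOn integrable_phi.integrableOn

lemma Phi_mul_sub_Phi_zero (l u : ℝ) :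
    Phi (l * u) - Phi 0 = ∫ s in (0:ℝ)..l, u * phi (s * u) := by
  rw [Phi_sub_Phi, intervalIntegral.integral_const_mul]
  simp only [intervalIntegral.mul_integral_comp_mul_right, zero_mul]

lemma monotone_Phi : Monotone Phi := fun _ _ hxy =>
  setIntegral_mono_set integrable_phi.integrableOn (.of_forall phi_nonneg)
    (Iic_subset_Iic.2 hxy).eventuallyLE

lemma abs_Phi_sub_Phi_le_one (x y : ℝ) : |Phi x - Phi y| ≤ 1 := by
  rw [abs_le]
  constructor <;> linarith [Phi_nonneg x, Phi_nonneg y, Phi_le_one x, Phi_le_one y]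

lemma integrable_phi_mul_Phi_sub_Phi (l c : ℝ) :
    Integrable fun u => phi u * (Phi (l * u) - Phi c) :=
  integrable_phi.mul_bdd
    ((monotone_Phi.measurable.comp (measurable_const_mul l)).sub_const _).aestronglyMeasurable
    (.of_forall fun _ => abs_Phi_sub_Phi_le_one _ _)

lemma integral_Iic_integral_mul_phi_comm (a l : ℝ) :
    ∫ u in Iic a, ∫ s in (0:ℝ)..l, u * phi u * phi (s * u) =
      ∫ s in (0:ℝ)..l, ∫ u in Iic a, u * phi u * phi (s * u) := by
  have hdom : Integrable (fun p : ℝ × ℝ => ‖p.1 * phi p.1‖ * (√(2 * π))⁻¹)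
      ((volume.restrict (Iic a)).prod (volume.restrict (uIoc (0:ℝ) l))) :=
    integrable_mul_phi.norm.restrict.mul_prod (integrableOn_const measure_Ioc_lt_top.ne)
  have hf : Integrable (Function.uncurry fun u s => u * phi u * phi (s * u))
      ((volume.restrict (Iic a)).prod (volume.restrict (uIoc (0:ℝ) l))) := by
    refine hdom.mono (Continuous.aestronglyMeasurable (by fun_prop)) (.of_forall fun p => ?_)
    rw [Function.uncurry_apply_pair, norm_mul _ (phi _), Real.norm_of_nonneg (phi_nonneg _),
      Real.norm_of_nonneg (by positivity : 0 ≤ ‖p.1 * phi p.1‖ * (√(2 * π))⁻¹)]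
    exact mul_le_mul_of_nonneg_left (phi_le_inv_sqrt_two_pi _) (norm_nonneg _)
  simp_rw [intervalIntegral.intervalIntegral_eq_integral_uIoc, integral_smul]
  rw [integral_integral_swap hf]

lemma integral_Iic_mul_phi_mul_phi (a s : ℝ) :
    ∫ u in Iic a, u * phi u * phi (s * u) =
      -(1 / (2 * π) * (exp (-a ^ 2 * (1 + s ^ 2) / 2) / (1 + s ^ 2))) := by
  simp_rw [mul_assoc, phi_mul_phi_mul, mul_left_comm _ (2 * π)⁻¹, integral_const_mul,
    integral_Iic_mul_exp_neg_mul_sq (by positivity : 0 < (1 + s ^ 2) / 2)]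
  field_simp

theorem skew_normal_cdf_owen (l a : ℝ) :
    ∫ u in Set.Iic a, 2 * phi u * Phi (l * u) = Phi a - 2 * owenT a l := by
  calc ∫ u in Iic a, 2 * phi u * Phi (l * u)
      = ∫ u in Iic a, phi u + 2 * (phi u * (Phi (l * u) - Phi 0)) := by
        congr! 2 with u
        rw [Phi_zero]; ring
    _ = Phi a + 2 * ∫ u in Iic a, ∫ s in (0:ℝ)..l, u * phi u * phi (s * u) := by
        rw [integral_add integrable_phi.integrableOn
          ((integrable_phi_mul_Phi_sub_Phi l 0).integrableOn.const_mul 2), integral_const_mul]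
        congr 2
        refine integral_congr_ae (.of_forall fun u => ?_)
        dsimp only
        rw [Phi_mul_sub_Phi_zero, ← intervalIntegral.integral_const_mul]
        ring_nf
    _ = Phi a - 2 * owenT a l := by
        simp_rw [integral_Iic_integral_mul_phi_comm, integral_Iic_mul_phi_mul_phi,
          intervalIntegral.integral_neg, intervalIntegral.integral_const_mul, owenT]
        ring
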